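/- Let Φ be a finite root system in a finite-dimensional real vector space V with Weyl group W, and let P ⊂ V be a convex polytope (convex hull of a finite set, with nonempty interior) such that w(P) = P for all w ∈ W and such that every edge of P is parallel to some root of Φ. Then W acts transitively on the set of vertices of P. -/

import Mathlib

open scoped RealInnerProductSpace
open Set
set_option linter.unusedSectionVars false
set_option linter.unusedVariables false
set_option maxHeartbeats 1600000

section aux
variable {V : Type*} [NormedAddCommGroup V] [InnerProductSpace ℝ V] [FiniteDimensional ℝ V]

def dspan (S : Set V) : Submodule ℝ V := Submodule.span ℝ {d | ∃ x ∈ S, ∃ y ∈ S, d = x - y}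

lemma mem_dspan {S : Set V} {x y : V} (hx : x ∈ S) (hy : y ∈ S) : x - y ∈ dspan S :=
  Submodule.subset_span ⟨x, hx, y, hy, rfl⟩

lemma le_max_on_convexHull (t : Finset V) (l : V →L[ℝ] ℝ) (M : ℝ)
    (hM : ∀ p ∈ t, l p ≤ M) : ∀ x ∈ convexHull ℝ (t : Set V), l x ≤ M := fun _x hx =>
  convexHull_min (fun p hp => hM p hp) (convex_halfSpace_le l.toLinearMap.isLinear M) hx

lemma argmax_convexHull [DecidableEq V] (t : Finset V) (l : V →L[ℝ] ℝ) (M : ℝ)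
    (hM : ∀ p ∈ t, l p ≤ M) (x : V) (hx : x ∈ convexHull ℝ (t : Set V)) (hlx : l x = M) :
    x ∈ convexHull ℝ ((t.filter (fun p => l p = M)) : Set V) := by
  classical
  rw [Finset.convexHull_eq] at hx
  obtain ⟨wt, hw0, hw1, hcm⟩ := hx
  have hxval : x = ∑ p ∈ t, wt p • p := by
    rw [← hcm, Finset.centerMass_eq_of_sum_1 _ _ hw1]; rfl
  have hlsum : ∑ p ∈ t, wt p * l p = M := by
    rw [← hlx, hxval, map_sum]
    exact Finset.sum_congr rfl fun p _ => by simp [mul_comm]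
  have hsum2 : ∑ p ∈ t, wt p * M = M := by rw [← Finset.sum_mul, hw1, one_mul]
  have heq : ∀ p ∈ t, wt p * l p = wt p * M := by
    rw [← Finset.sum_eq_sum_iff_of_le
      (fun p hp => mul_le_mul_of_nonneg_left (hM p hp) (hw0 p hp))]
    rw [hlsum, hsum2]
  have hzero : ∀ p ∈ t, p ∉ t.filter (fun p => l p = M) → wt p = 0 := by
    intro p hp hpf
    by_contra hwp
    exact hpf (Finset.mem_filter.2 ⟨hp, by
      have := heq p hp
      exact mul_left_cancel₀ hwp this⟩)
  have hcm' : (t.filter (fun p => l p = M)).centerMass wt id = x := by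
    rw [Finset.centerMass_subset id (Finset.filter_subset _ t) hzero, hcm]
  rw [← hcm']
  apply Finset.centerMass_mem_convexHull
  · exact fun p hp => hw0 p (Finset.filter_subset _ t hp)
  · rw [Finset.sum_subset (Finset.filter_subset _ t) hzero, hw1]; norm_num
  · exact fun p hp => Finset.mem_coe.2 hp

lemma isExtreme_argmax [DecidableEq V] (t : Finset V) (l : V →L[ℝ] ℝ) (M : ℝ)
    (hM : ∀ p ∈ t, l p ≤ M) (hne : ∃ p ∈ t, l p = M) :
    IsExtreme ℝ (convexHull ℝ (t : Set V))
      (convexHull ℝ ((t.filter fun p => l p = M) : Set V)) := by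
  have hsub : convexHull ℝ ((t.filter fun p => l p = M) : Set V) ⊆ convexHull ℝ (t : Set V) :=
    convexHull_mono (by exact_mod_cast Finset.filter_subset _ t)
  have hexp : IsExposed ℝ (convexHull ℝ (t : Set V))
      (convexHull ℝ ((t.filter fun p => l p = M) : Set V)) := by
    intro _
    refine ⟨l, ?_⟩
    ext x
    constructor
    · intro hx
      have hx' : x ∈ convexHull ℝ (t : Set V) := hsub hx
      have h2 : M ≤ l x := by
        refine convexHull_min (fun p hp => ?_) (convex_halfSpace_ge l.toLinearMap.isLinear M) hx
        rcases Finset.mem_coe.1 hp with hp'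
        exact (Finset.mem_filter.1 hp').2.ge
      exact ⟨hx', fun z hz => (le_max_on_convexHull t l M hM z hz).trans h2⟩
    · rintro ⟨hxt, hxmax⟩
      obtain ⟨p, hp, hpM⟩ := hne
      have hlx : l x = M :=
        le_antisymm (le_max_on_convexHull t l M hM x hxt)
          (hpM ▸ hxmax p (subset_convexHull ℝ _ hp))
      exact argmax_convexHull t l M hM x hxt hlx
  exact hexp.isExtreme

lemma sub_mem_dspan_of_mem_convexHull (t : Finset V) {u x : V} (hu : u ∈ t)
    (hx : x ∈ convexHull ℝ (t : Set V)) : x - u ∈ dspan (t : Set V) := by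
  rw [Finset.convexHull_eq] at hx
  obtain ⟨w, hw0, hw1, hcm⟩ := hx
  have hxval : x = ∑ p ∈ t, w p • p := by
    rw [← hcm, Finset.centerMass_eq_of_sum_1 _ _ hw1]; rfl
  have hkey : x - u = ∑ p ∈ t, w p • (p - u) := by
    have : ∑ p ∈ t, w p • (p - u) = (∑ p ∈ t, w p • p) - (∑ p ∈ t, w p • u) := by
      simp [smul_sub, Finset.sum_sub_distrib]
    rw [this, ← Finset.sum_smul, hw1, one_smul, hxval]
  rw [hkey]
  exact Submodule.sum_mem _ fun p hp =>
    Submodule.smul_mem _ _ (mem_dspan (Finset.mem_coe.2 hp) (Finset.mem_coe.2 hu))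

lemma dspan_convexHull (t : Finset V) : dspan (convexHull ℝ (t : Set V)) = dspan (t : Set V) := by
  refine le_antisymm ?_ (Submodule.span_mono ?_)
  · rw [dspan, Submodule.span_le]
    rintro d ⟨x, hx, y, hy, rfl⟩
    have hne : (t : Set V).Nonempty := by
      rcases convexHull_nonempty_iff.1 ⟨x, hx⟩ with h; exact h
    obtain ⟨u, hu⟩ := hne
    have h1 := sub_mem_dspan_of_mem_convexHull t (Finset.mem_coe.1 hu) hx
    have h2 := sub_mem_dspan_of_mem_convexHull t (Finset.mem_coe.1 hu) hy
    have : x - y = (x - u) - (y - u) := by abel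
    rw [this]
    exact sub_mem h1 h2
  · rintro d ⟨x, hx, y, hy, rfl⟩
    exact ⟨x, subset_convexHull ℝ _ hx, y, subset_convexHull ℝ _ hy, rfl⟩


/-- generic functional: nonvanishing on finitely many nonzero vectors -/
lemma exists_generic (D : Finset V) : ∃ y : V, ∀ d ∈ D, d ≠ 0 → ⟪y, d⟫ ≠ 0 := by
  classical
  induction D using Finset.induction_on with
  | empty => exact ⟨0, by simp⟩
  | @insert d D hd ih =>
    obtain ⟨y, hy⟩ := ih
    by_cases hd0 : d = 0
    · refine ⟨y, fun d' hd' hne => ?_⟩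
      rcases Finset.mem_insert.1 hd' with rfl | h
      · exact absurd hd0 hne
      · exact hy d' h hne
    · obtain ⟨ε, hε⟩ := Infinite.exists_notMem_finset
        ((insert d D).image (fun d' => -⟪y, d'⟫ / ⟪d, d'⟫))
      refine ⟨y + ε • d, fun d' hd' hne => ?_⟩
      have hval : ⟪y + ε • d, d'⟫ = ⟪y, d'⟫ + ε * ⟪d, d'⟫ := by
        rw [inner_add_left, real_inner_smul_left]
      rw [hval]
      by_cases hdd : ⟪d, d'⟫ = 0
      · rw [hdd, mul_zero, add_zero]
        rcases Finset.mem_insert.1 hd' with rfl | h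
        · exact absurd hdd (by simpa [inner_self_eq_zero] using hne)
        · exact hy d' h hne
      · intro hzero
        apply hε
        refine Finset.mem_image.2 ⟨d', hd', ?_⟩
        field_simp
        linarith

lemma extremePoint_image (e : V ≃ₗ[ℝ] V) {P : Set V} (hP : e '' P = P) {x : V}
    (hx : x ∈ Set.extremePoints ℝ P) : e x ∈ Set.extremePoints ℝ P := by
  refine ⟨hP ▸ ⟨x, hx.1, rfl⟩, ?_⟩
  rintro z hz z' hz' hseg
  obtain ⟨a, ha, rfl⟩ : ∃ a ∈ P, e a = z := by
    rw [← hP] at hz; obtain ⟨a, ha, rfl⟩ := hz; exact ⟨a, ha, rfl⟩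
  obtain ⟨a', ha', rfl⟩ : ∃ a' ∈ P, e a' = z' := by
    rw [← hP] at hz'; obtain ⟨a', ha', rfl⟩ := hz'; exact ⟨a', ha', rfl⟩
  have himg : openSegment ℝ (e a) (e a') = e '' openSegment ℝ a a' := by
    have := image_openSegment (𝕜 := ℝ) (e.toLinearMap.toAffineMap) a a'
    simpa using this.symm
  rw [himg] at hseg
  obtain ⟨x₀, hx₀seg, hx₀⟩ := hseg
  have : x₀ = x := e.injective hx₀
  subst this
  rw [hx.2 ha ha' hx₀seg]

/-- reflection in the hyperplane orthogonal to α -/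
noncomputable def rfl' (α : V) (hα : α ≠ 0) : V ≃ₗ[ℝ] V :=
  LinearEquiv.ofInvolutive
    { toFun := fun x => x - (2 * ⟪x, α⟫ / ⟪α, α⟫) • α
      map_add' := fun x y => by
        rw [inner_add_left]
        rw [show 2 * (⟪x, α⟫ + ⟪y, α⟫) / ⟪α, α⟫
            = 2 * ⟪x, α⟫ / ⟪α, α⟫ + 2 * ⟪y, α⟫ / ⟪α, α⟫ by ring]
        rw [add_smul]; abel
      map_smul' := fun c x => by
        rw [real_inner_smul_left]
        rw [show 2 * (c * ⟪x, α⟫) / ⟪α, α⟫ = c * (2 * ⟪x, α⟫ / ⟪α, α⟫) by ring]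
        rw [RingHom.id_apply, smul_sub, smul_smul] }
    (by
      intro x
      have hαα : ⟪α, α⟫ ≠ (0:ℝ) := fun h => hα (inner_self_eq_zero.1 h)
      dsimp only [LinearMap.coe_mk, AddHom.coe_mk]
      have hc : 2 * ⟪x - (2 * ⟪x, α⟫ / ⟪α, α⟫) • α, α⟫ / ⟪α, α⟫
          = -(2 * ⟪x, α⟫ / ⟪α, α⟫) := by
        rw [inner_sub_left, real_inner_smul_left]
        field_simp
        ring
      rw [hc, neg_smul]
      abel)

lemma rfl'_apply (α : V) (hα : α ≠ 0) (x : V) :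
    rfl' α hα x = x - (2 * ⟪x, α⟫ / ⟪α, α⟫) • α := rfl


/-- from rank ≥ 2 extract an independent pair of differences with base point u -/
lemma exists_indep_pair (t : Finset V) (u : V) (hu : u ∈ t)
    (hr : 2 ≤ Module.finrank ℝ (dspan (t : Set V))) :
    ∃ p ∈ t, ∃ q ∈ t, p - u ≠ 0 ∧ q - u ∉ Submodule.span ℝ {p - u} := by
  classical
  have hle : dspan (t : Set V) ≤ Submodule.span ℝ ((fun p => p - u) '' (t : Set V)) := by
    rw [dspan, Submodule.span_le]
    rintro d ⟨x, hx, y, hy, rfl⟩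
    have : x - y = (x - u) - (y - u) := by abel
    rw [this]
    exact sub_mem (Submodule.subset_span ⟨x, hx, rfl⟩) (Submodule.subset_span ⟨y, hy, rfl⟩)
  by_cases hall : ∀ p ∈ t, p - u = 0
  · exfalso
    have : dspan (t : Set V) ≤ ⊥ := by
      refine hle.trans ?_
      rw [Submodule.span_le]
      rintro d ⟨x, hx, rfl⟩
      simp [hall x (Finset.mem_coe.1 hx)]
    rw [le_bot_iff] at this
    rw [this] at hr
    simp at hr
  · push_neg at hall
    obtain ⟨p, hp, hp0⟩ := hall
    by_cases hall2 : ∀ q ∈ t, q - u ∈ Submodule.span ℝ {p - u}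
    · exfalso
      have hle2 : dspan (t : Set V) ≤ Submodule.span ℝ {p - u} := by
        refine hle.trans ?_
        rw [Submodule.span_le]
        rintro d ⟨x, hx, rfl⟩
        exact hall2 x (Finset.mem_coe.1 hx)
      have h1 := Submodule.finrank_mono hle2
      rw [finrank_span_singleton hp0] at h1
      omega
    · push_neg at hall2
      obtain ⟨q, hq, hq0⟩ := hall2
      exact ⟨p, hp, q, hq, hp0, hq0⟩

/-- there is a functional (given by a vector) that is not affine in y on t -/
lemma exists_not_affine (t : Finset V) (y u p q : V) (hp : p ∈ t) (hq : q ∈ t) (hu : u ∈ t)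
    (ha : p - u ≠ 0) (hb : q - u ∉ Submodule.span ℝ {p - u}) :
    ∃ w : V, ¬ ∃ A B : ℝ, ∀ x ∈ t, ⟪w, x⟫ = A + B * ⟪y, x⟫ := by
  have hb0 : q - u ≠ 0 := fun h => hb (h ▸ Submodule.zero_mem _)
  have haa : ⟪p - u, p - u⟫ ≠ (0:ℝ) := fun h => ha (inner_self_eq_zero.1 h)
  have hbb : ⟪q - u, q - u⟫ ≠ (0:ℝ) := fun h => hb0 (inner_self_eq_zero.1 h)
  by_cases hΔ : ⟪y, p⟫ - ⟪y, u⟫ = 0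
  · -- use w = (p-u) orthogonalized against (q-u)
    set w := (p - u) - (⟪q - u, p - u⟫ / ⟪q - u, q - u⟫) • (q - u) with hw
    refine ⟨w, ?_⟩
    rintro ⟨A, B, hAB⟩
    have h1 : ⟪w, p⟫ - ⟪w, u⟫ = B * (⟪y, p⟫ - ⟪y, u⟫) := by
      rw [hAB p hp, hAB u hu]; ring
    rw [hΔ, mul_zero] at h1
    have h2 : ⟪w, p - u⟫ = 0 := by rw [inner_sub_right]; linarith
    have hwb : ⟪w, q - u⟫ = 0 := by
      rw [hw, inner_sub_left, real_inner_smul_left, div_mul_cancel₀ _ hbb]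
      rw [real_inner_comm (q-u) (p-u)]
      ring
    have hww : ⟪w, w⟫ = 0 := by
      nth_rewrite 2 [hw]
      rw [inner_sub_right, inner_smul_right, h2, hwb]
      ring
    have hw0 : w = 0 := inner_self_eq_zero.1 hww
    have hpe : p - u = (⟪q - u, p - u⟫ / ⟪q - u, q - u⟫) • (q - u) := by
      apply sub_eq_zero.1
      rw [← hw]; exact hw0
    set c := ⟪q - u, p - u⟫ / ⟪q - u, q - u⟫ with hc
    have hcne : c ≠ 0 := by
      intro h; rw [h, zero_smul] at hpe; exact ha hpe
    apply hb
    refine Submodule.mem_span_singleton.2 ⟨c⁻¹, ?_⟩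
    rw [hpe, smul_smul, inv_mul_cancel₀ hcne, one_smul]
  · -- use w = (q-u) orthogonalized against (p-u)
    set w := (q - u) - (⟪p - u, q - u⟫ / ⟪p - u, p - u⟫) • (p - u) with hw
    refine ⟨w, ?_⟩
    rintro ⟨A, B, hAB⟩
    have hwa : ⟪w, p - u⟫ = 0 := by
      rw [hw, inner_sub_left, real_inner_smul_left, div_mul_cancel₀ _ haa]
      rw [real_inner_comm (p-u) (q-u)]
      ring
    have h1 : ⟪w, p - u⟫ = B * (⟪y, p⟫ - ⟪y, u⟫) := by
      rw [inner_sub_right, hAB p hp, hAB u hu]; ring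
    have hB : B = 0 := by
      rw [hwa] at h1
      rcases mul_eq_zero.1 h1.symm with h | h
      · exact h
      · exact absurd h hΔ
    have h2 : ⟪w, q - u⟫ = 0 := by
      rw [inner_sub_right, hAB q hq, hAB u hu, hB]; ring
    have hww : ⟪w, w⟫ = 0 := by
      nth_rewrite 2 [hw]
      rw [inner_sub_right, inner_smul_right, h2, hwa]
      ring
    have hw0 : w = 0 := inner_self_eq_zero.1 hww
    apply hb
    have hqe : q - u = (⟪p - u, q - u⟫ / ⟪p - u, p - u⟫) • (p - u) := by
      apply sub_eq_zero.1
      rw [← hw]; exact hw0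
    exact Submodule.mem_span_singleton.2 ⟨_, hqe.symm⟩

lemma exists_edge (y : V) (t : Finset V) :
    ∀ u ∈ t, u ∈ Set.extremePoints ℝ (convexHull ℝ (t : Set V)) →
    (∃ p ∈ t, ⟪y, u⟫ < ⟪y, p⟫) →
    ∃ E : Set V, IsExtreme ℝ (convexHull ℝ (t : Set V)) E ∧
      Module.rank ℝ (dspan E) = 1 ∧ u ∈ E ∧ ∃ z ∈ E, ⟪y, u⟫ < ⟪y, z⟫ := by
  classical
  induction t using Finset.strongInduction with
  | _ t ih =>
  intro u hut hext hhigh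
  obtain ⟨p₀, hp₀t, hp₀y⟩ := hhigh
  rcases le_or_gt (Module.finrank ℝ (dspan ((t : Set V)))) 1 with hr | hr
  · -- base case: the whole polytope is an edge
    refine ⟨convexHull ℝ (t : Set V), IsExtreme.rfl, ?_, subset_convexHull ℝ _ hut,
      p₀, subset_convexHull ℝ _ hp₀t, hp₀y⟩
    rw [dspan_convexHull, Module.rank_eq_one_iff_finrank_eq_one]
    refine le_antisymm hr ?_
    have hne : p₀ - u ≠ 0 := fun h0 => by
      have : p₀ = u := by rwa [sub_eq_zero] at h0
      rw [this] at hp₀y; exact lt_irrefl _ hp₀y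
    have hmem : p₀ - u ∈ dspan ((t : Set V)) := mem_dspan hp₀t hut
    have : Nontrivial (dspan ((t : Set V))) :=
      ⟨⟨p₀ - u, hmem⟩, 0, by simpa [Subtype.ext_iff] using hne⟩
    have := Module.finrank_pos (R := ℝ) (M := dspan ((t : Set V)))
    omega
  · -- step
    have hr2 : 2 ≤ Module.finrank ℝ (dspan ((t : Set V))) := hr
    -- u is not in the hull of the rest
    have hsub2 : convexHull ℝ ((t.erase u : Finset V) : Set V) ⊆ convexHull ℝ (t : Set V) :=
      convexHull_mono (by exact_mod_cast Finset.erase_subset u t)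
    have hu_not : u ∉ convexHull ℝ ((t.erase u : Finset V) : Set V) := by
      intro hmem
      have h1 : u ∈ Set.extremePoints ℝ (convexHull ℝ ((t.erase u : Finset V) : Set V)) :=
        ⟨hmem, fun z hz z' hz' hseg => hext.2 (hsub2 hz) (hsub2 hz') hseg⟩
      have h2 := extremePoints_convexHull_subset h1
      exact (Finset.notMem_erase u t) (by exact_mod_cast h2)
    obtain ⟨f₀, c0, hc0, hcu⟩ := geometric_hahn_banach_closed_point
      (convex_convexHull ℝ _)
      (((t.erase u).finite_toSet.isCompact_convexHull ℝ).isClosed) hu_not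
    have hf₀ : ∀ x ∈ t.erase u, f₀ x < f₀ u :=
      fun x hx => (hc0 x (subset_convexHull ℝ _ hx)).trans hcu
    obtain ⟨p, hp, q, hq, hpa, hqb⟩ := exists_indep_pair t u hut hr2
    obtain ⟨wna, hwna⟩ := exists_not_affine t y u p q hp hq hut hpa hqb
    -- a separating functional that is not affine in y on t
    have hgood : ∃ f : V →L[ℝ] ℝ, (∀ x ∈ t.erase u, f x < f u) ∧
        ¬ ∃ A B : ℝ, ∀ x ∈ t, f x = A + B * ⟪y, x⟫ := by
      by_cases hf₀aff : ∃ A B : ℝ, ∀ x ∈ t, f₀ x = A + B * ⟪y, x⟫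
      · have herne : (t.erase u).Nonempty :=
          ⟨p, Finset.mem_erase.2 ⟨fun h => hpa (by rw [h]; simp), hp⟩⟩
        set δ := (t.erase u).inf' herne (fun x => f₀ u - f₀ x) with hδ
        have hδpos : 0 < δ := by
          rw [hδ, Finset.lt_inf'_iff]; intro x hx; have := hf₀ x hx; linarith
        set Mw := (t.erase u).sup' herne (fun x => |⟪wna, x⟫ - ⟪wna, u⟫|) with hMw
        obtain ⟨x₁, hx₁⟩ := herne
        have hMw0 : (0:ℝ) ≤ Mw :=
          le_trans (abs_nonneg _) (Finset.le_sup' (fun x => |⟪wna, x⟫ - ⟪wna, u⟫|) hx₁)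
        set ε := δ / (1 + Mw) with hε
        have hεpos : 0 < ε := div_pos hδpos (by linarith)
        have happ : ∀ x : V, (f₀ + ε • innerSL ℝ wna) x = f₀ x + ε * ⟪wna, x⟫ := fun x => by
          simp
        refine ⟨f₀ + ε • innerSL ℝ wna, ?_, ?_⟩
        · intro x hx
          rw [happ, happ]
          have hb1 : ⟪wna, x⟫ - ⟪wna, u⟫ ≤ Mw :=
            (le_abs_self _).trans (Finset.le_sup' (fun x => |⟪wna, x⟫ - ⟪wna, u⟫|) hx)
          have h2 : ε * Mw < δ := by
            rw [hε, div_mul_eq_mul_div, div_lt_iff₀ (by linarith : (0:ℝ) < 1 + Mw)]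
            nlinarith
          have hδle : δ ≤ f₀ u - f₀ x := Finset.inf'_le _ hx
          nlinarith
        · rintro ⟨A, B, hAB⟩
          obtain ⟨A₀, B₀, hA₀⟩ := hf₀aff
          apply hwna
          refine ⟨(A - A₀)/ε, (B - B₀)/ε, fun x hx => ?_⟩
          have h1 := hAB x hx
          rw [happ, hA₀ x hx] at h1
          field_simp
          linear_combination h1
      · exact ⟨f₀, hf₀, hf₀aff⟩
    obtain ⟨f, hfsep, hfnaff⟩ := hgood
    -- the tilted functional
    set S := t.filter (fun x => ⟪y, u⟫ < ⟪y, x⟫) with hSdef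
    have hSne : S.Nonempty := ⟨p₀, Finset.mem_filter.2 ⟨hp₀t, hp₀y⟩⟩
    have hSprops : ∀ x ∈ S, 0 < ⟪y, x⟫ - ⟪y, u⟫ ∧ 0 < f u - f x := by
      intro x hx
      obtain ⟨hxt, hxy⟩ := Finset.mem_filter.1 hx
      have hxu : x ≠ u := fun h => by rw [h] at hxy; exact lt_irrefl _ hxy
      have := hfsep x (Finset.mem_erase.2 ⟨hxu, hxt⟩)
      exact ⟨by linarith, by linarith⟩
    set lam := S.inf' hSne (fun x => (f u - f x) / (⟪y, x⟫ - ⟪y, u⟫)) with hlamdef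
    have hlampos : 0 < lam := by
      rw [hlamdef, Finset.lt_inf'_iff]
      intro x hx
      obtain ⟨h1, h2⟩ := hSprops x hx
      exact div_pos h2 h1
    set h := f + lam • innerSL ℝ y with hhdef
    have happ : ∀ x : V, h x = f x + lam * ⟪y, x⟫ := fun x => by
      rw [hhdef]; simp
    have hmax : ∀ x ∈ t, h x ≤ h u := by
      intro x hxt
      by_cases hxu : x = u
      · subst hxu; exact le_refl _
      by_cases hxy : ⟪y, x⟫ ≤ ⟪y, u⟫
      · have := hfsep x (Finset.mem_erase.2 ⟨hxu, hxt⟩)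
        rw [happ, happ]; nlinarith
      · push_neg at hxy
        have hxS : x ∈ S := Finset.mem_filter.2 ⟨hxt, hxy⟩
        have hle := Finset.inf'_le (fun x => (f u - f x) / (⟪y, x⟫ - ⟪y, u⟫)) hxS
        rw [← hlamdef] at hle
        have hd : (0:ℝ) < ⟪y, x⟫ - ⟪y, u⟫ := by linarith
        rw [le_div_iff₀ hd] at hle
        rw [happ, happ]; nlinarith
    have hAu : u ∈ t.filter (fun x => h x = h u) := Finset.mem_filter.2 ⟨hut, rfl⟩
    obtain ⟨xh, hxhS, hxheq⟩ :=
      Finset.exists_mem_eq_inf' hSne (fun x => (f u - f x) / (⟪y, x⟫ - ⟪y, u⟫))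
    have hxhA : xh ∈ t.filter (fun x => h x = h u) := by
      obtain ⟨hd, hn⟩ := hSprops xh hxhS
      have hlamval : lam * (⟪y, xh⟫ - ⟪y, u⟫) = f u - f xh := by
        rw [hlamdef, hxheq, div_mul_cancel₀ _ hd.ne']
      refine Finset.mem_filter.2 ⟨(Finset.mem_filter.1 hxhS).1, ?_⟩
      rw [happ, happ]
      linear_combination hlamval
    have hxhy : ⟪y, u⟫ < ⟪y, xh⟫ := (Finset.mem_filter.1 hxhS).2
    have hAne : t.filter (fun x => h x = h u) ≠ t := by
      intro hAt
      apply hfnaff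
      refine ⟨h u, -lam, fun x hxt => ?_⟩
      have hxA : x ∈ t.filter (fun x => h x = h u) := by rw [hAt]; exact hxt
      have hxeq : h x = h u := (Finset.mem_filter.1 hxA).2
      rw [happ] at hxeq
      linear_combination hxeq
    set A := t.filter (fun x => h x = h u) with hAdef
    have hAss : A ⊂ t := (Finset.filter_subset _ t).ssubset_of_ne hAne
    have hface : IsExtreme ℝ (convexHull ℝ (t : Set V)) (convexHull ℝ (A : Set V)) :=
      isExtreme_argmax t h (h u) hmax ⟨u, hut, rfl⟩
    have hsubA : convexHull ℝ (A : Set V) ⊆ convexHull ℝ (t : Set V) :=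
      convexHull_mono (by exact_mod_cast Finset.filter_subset _ t)
    have hextA : u ∈ Set.extremePoints ℝ (convexHull ℝ (A : Set V)) :=
      ⟨subset_convexHull ℝ _ hAu, fun z hz z' hz' hseg => hext.2 (hsubA hz) (hsubA hz') hseg⟩
    obtain ⟨E, hE1, hE2, hE3, hE4⟩ := ih A hAss u hAu hextA ⟨xh, hxhA, hxhy⟩
    exact ⟨E, hface.trans hE1, hE2, hE3, hE4⟩

end aux

/-- Let `Φ` be a finite (reduced, crystallographic) root system spanning a
finite-dimensional real inner product space `V`, with Weyl group `W` (generated by the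
orthogonal reflections in the roots).  If `P` is a convex polytope (convex hull of a
finite set, with nonempty interior) which is `W`-stable and all of whose edges are
parallel to roots, then `W` acts transitively on the vertices of `P`. -/
theorem stmt5 (V : Type*) [NormedAddCommGroup V] [InnerProductSpace ℝ V]
    [FiniteDimensional ℝ V]
    (Φ : Finset V)
    (h0 : (0 : V) ∉ Φ)
    (hspan : Submodule.span ℝ (Φ : Set V) = ⊤)
    (hreflmem : ∀ α ∈ Φ, ∀ β ∈ Φ, β - (2 * ⟪β, α⟫ / ⟪α, α⟫) • α ∈ Φ)
    (hcrystal : ∀ α ∈ Φ, ∀ β ∈ Φ, ∃ m : ℤ, 2 * ⟪β, α⟫ / ⟪α, α⟫ = m)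
    (hreduced : ∀ α ∈ Φ, ∀ (t : ℝ), t • α ∈ (Φ : Set V) → t = 1 ∨ t = -1)
    (W : Subgroup (V ≃ₗ[ℝ] V))
    (hW : W = Subgroup.closure
      {g : V ≃ₗ[ℝ] V | ∃ α ∈ Φ, ∀ x, g x = x - (2 * ⟪x, α⟫ / ⟪α, α⟫) • α})
    (s : Finset V) (P : Set V) (hP : P = convexHull ℝ (s : Set V))
    (hint : (interior P).Nonempty)
    (hWP : ∀ g ∈ W, (g : V ≃ₗ[ℝ] V) '' P = P)
    (hedges : ∀ F : Set V, IsExtreme ℝ P F →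
      Module.rank ℝ (Submodule.span ℝ {d | ∃ x ∈ F, ∃ y ∈ F, d = x - y}) = 1 →
      ∃ α ∈ Φ, Submodule.span ℝ {d | ∃ x ∈ F, ∃ y ∈ F, d = x - y} =
        Submodule.span ℝ {α}) :
    ∀ v ∈ Set.extremePoints ℝ P, ∀ w ∈ Set.extremePoints ℝ P,
      ∃ g ∈ W, (g : V ≃ₗ[ℝ] V) v = w := by
  classical
  subst hP
  -- a linear functional (given by the vector y) injective on s
  obtain ⟨y, hy⟩ := exists_generic
    (((s ×ˢ s).filter (fun pq => pq.1 ≠ pq.2)).image (fun pq => pq.1 - pq.2))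
  have hgen : ∀ p ∈ s, ∀ q ∈ s, p ≠ q → ⟪y, p⟫ ≠ ⟪y, q⟫ := by
    intro p hp q hq hne heq
    have hd : p - q ∈ ((s ×ˢ s).filter (fun pq => pq.1 ≠ pq.2)).image (fun pq => pq.1 - pq.2) :=
      Finset.mem_image.2 ⟨(p, q),
        Finset.mem_filter.2 ⟨Finset.mem_product.2 ⟨hp, hq⟩, hne⟩, rfl⟩
    refine hy _ hd (sub_ne_zero.2 hne) ?_
    rw [inner_sub_right]; linarith
  -- s is nonempty
  have hsne : s.Nonempty := by
    obtain ⟨x, hx⟩ := hint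
    exact Finset.coe_nonempty.1 (convexHull_nonempty_iff.1 ⟨x, interior_subset hx⟩)
  -- the unique maximizer p₀ of ⟪y,·⟫ over P
  obtain ⟨p₀, hp₀s, hp₀max⟩ := s.exists_max_image (fun p => ⟪y, p⟫) hsne
  have hp₀max' : ∀ p ∈ s, (innerSL ℝ y) p ≤ ⟪y, p₀⟫ := hp₀max
  have hmaxP : ∀ x ∈ convexHull ℝ (s : Set V), ⟪y, x⟫ ≤ ⟪y, p₀⟫ :=
    le_max_on_convexHull s (innerSL ℝ y) ⟪y, p₀⟫ hp₀max'
  have huniq : ∀ x ∈ convexHull ℝ (s : Set V), ⟪y, x⟫ = ⟪y, p₀⟫ → x = p₀ := by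
    intro x hx hxe
    have h1 := argmax_convexHull s (innerSL ℝ y) ⟪y, p₀⟫ hp₀max' x hx hxe
    have h2 : ((s.filter (fun p => (innerSL ℝ y) p = ⟪y, p₀⟫)) : Set V) ⊆ {p₀} := by
      intro p hp
      obtain ⟨hps, hpe⟩ := Finset.mem_filter.1 (Finset.mem_coe.1 hp)
      by_contra hne
      exact hgen p hps p₀ hp₀s (by simpa using hne) hpe
    have h3 := convexHull_mono h2 h1
    rwa [convexHull_singleton, Set.mem_singleton_iff] at h3
  -- every vertex can be moved to p₀ by the Weyl group
  have horb : ∀ v ∈ Set.extremePoints ℝ (convexHull ℝ (s : Set V)),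
      ∃ g ∈ W, (g : V ≃ₗ[ℝ] V) v = p₀ := by
    intro v hv
    set s' := s.filter (fun x => ∃ g ∈ W, (g : V ≃ₗ[ℝ] V) v = x) with hs'def
    have horbmem : ∀ g ∈ W, (g : V ≃ₗ[ℝ] V) v ∈ s' := by
      intro g hg
      refine Finset.mem_filter.2 ⟨?_, g, hg, rfl⟩
      have hgext := extremePoint_image g (hWP g hg) hv
      exact Finset.mem_coe.1 (extremePoints_convexHull_subset hgext)
    have hs'ne : s'.Nonempty := ⟨v, by simpa using horbmem 1 W.one_mem⟩
    obtain ⟨u, hus', humax'⟩ := s'.exists_max_image (fun p => ⟪y, p⟫) hs'ne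
    obtain ⟨hus, g₀, hg₀W, hg₀v⟩ := Finset.mem_filter.1 hus'
    have hmaxorb : ∀ g ∈ W, ⟪y, (g : V ≃ₗ[ℝ] V) v⟫ ≤ ⟪y, u⟫ :=
      fun g hg => humax' _ (horbmem g hg)
    by_cases hup : u = p₀
    · exact ⟨g₀, hg₀W, by rw [hg₀v, hup]⟩
    exfalso
    have huP : u ∈ convexHull ℝ (s : Set V) := subset_convexHull ℝ _ hus
    have hustrict : ⟪y, u⟫ < ⟪y, p₀⟫ :=
      lt_of_le_of_ne (hp₀max u hus) (fun h => hup (huniq u huP h))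
    have huext : u ∈ Set.extremePoints ℝ (convexHull ℝ (s : Set V)) := by
      rw [← hg₀v]; exact extremePoint_image g₀ (hWP g₀ hg₀W) hv
    obtain ⟨E, hEex, hErank, huE, z, hzE, hzy⟩ :=
      exists_edge y s u hus huext ⟨p₀, hp₀s, hustrict⟩
    obtain ⟨α, hαΦ, hαspan⟩ := hedges E hEex hErank
    have hzu : z - u ∈ Submodule.span ℝ {α} := by
      rw [← hαspan]; exact mem_dspan hzE huE
    obtain ⟨c, hc⟩ := Submodule.mem_span_singleton.1 hzu
    have hα0 : α ≠ 0 := fun h => h0 (h ▸ hαΦ)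
    have hαα : ⟪α, α⟫ ≠ (0 : ℝ) := fun h => hα0 (inner_self_eq_zero.1 h)
    have hzne : z - u ≠ 0 := fun h => by
      rw [sub_eq_zero] at h; rw [h] at hzy; exact lt_irrefl _ hzy
    have hc0 : c ≠ 0 := fun h => hzne (by rw [← hc, h, zero_smul])
    have hnegroot : -α ∈ Φ := by
      have h2 : (2 * ⟪α, α⟫ / ⟪α, α⟫ : ℝ) = 2 := by field_simp
      have h3 := hreflmem α hαΦ α hαΦ
      rw [h2] at h3
      have h4 : α - (2 : ℝ) • α = -α := by
        rw [two_smul]; abel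
      rwa [h4] at h3
    have hcases : ∃ (β : V) (t₁ : ℝ), β ∈ Φ ∧ 0 < t₁ ∧ z = u + t₁ • β := by
      rcases lt_or_gt_of_ne hc0 with hneg | hpos
      · refine ⟨-α, -c, hnegroot, by linarith, ?_⟩
        rw [smul_neg, neg_smul, neg_neg, hc]; abel
      · refine ⟨α, c, hαΦ, hpos, ?_⟩
        rw [hc]; abel
    obtain ⟨β, t₁, hβΦ, ht₁pos, hzval⟩ := hcases
    have hβ0 : β ≠ 0 := fun h => h0 (h ▸ hβΦ)
    have hββ : ⟪β, β⟫ ≠ (0 : ℝ) := fun h => hβ0 (inner_self_eq_zero.1 h)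
    have hyβ : 0 < ⟪y, β⟫ := by
      have h1 : ⟪y, z⟫ = ⟪y, u⟫ + t₁ * ⟪y, β⟫ := by
        rw [hzval, inner_add_right, real_inner_smul_right]
      nlinarith
    have hrW : rfl' β hβ0 ∈ W := by
      rw [hW]; exact Subgroup.subset_closure ⟨β, hβΦ, fun x => rfl⟩
    have hc₀nn : 0 ≤ 2 * ⟪u, β⟫ / ⟪β, β⟫ := by
      have hcomp : ((rfl' β hβ0 * g₀ : V ≃ₗ[ℝ] V)) v = u - (2 * ⟪u, β⟫ / ⟪β, β⟫) • β := by
        have : ((rfl' β hβ0 * g₀ : V ≃ₗ[ℝ] V)) v = rfl' β hβ0 (g₀ v) := rfl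
        rw [this, hg₀v, rfl'_apply]
      have hle := hmaxorb _ (W.mul_mem hrW hg₀W)
      rw [hcomp, inner_sub_right, real_inner_smul_right] at hle
      nlinarith
    set c₀ := 2 * ⟪u, β⟫ / ⟪β, β⟫ with hc₀def
    have hzP : z ∈ convexHull ℝ (s : Set V) := hEex.1 hzE
    have hz'P : u - (c₀ + t₁) • β ∈ convexHull ℝ (s : Set V) := by
      have hrz : rfl' β hβ0 z = u - (c₀ + t₁) • β := by
        rw [rfl'_apply β hβ0 z, hzval]
        have hinner : ⟪u + t₁ • β, β⟫ = ⟪u, β⟫ + t₁ * ⟪β, β⟫ := by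
          rw [inner_add_left, real_inner_smul_left]
        rw [hinner]
        have hco : 2 * (⟪u, β⟫ + t₁ * ⟪β, β⟫) / ⟪β, β⟫ = c₀ + 2 * t₁ := by
          rw [hc₀def]; field_simp
        rw [hco]
        module
      rw [← hrz, ← hWP _ hrW]
      exact ⟨z, hzP, rfl⟩
    have hd : (0 : ℝ) < c₀ + 2 * t₁ := by linarith
    have hseg : u ∈ openSegment ℝ z (u - (c₀ + t₁) • β) := by
      refine ⟨(c₀ + t₁) / (c₀ + 2 * t₁), t₁ / (c₀ + 2 * t₁),
        div_pos (by linarith) hd, div_pos ht₁pos hd, ?_, ?_⟩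
      · rw [← add_div, div_eq_one_iff_eq hd.ne']; ring
      · rw [hzval]
        match_scalars
        · field_simp; ring
        · field_simp; ring
    have hz1 := huext.2 hzP hz'P hseg
    exact hzne (by rw [hz1]; simp)
  intro v hv w hw
  obtain ⟨g, hgW, hgv⟩ := horb v hv
  obtain ⟨g', hg'W, hg'w⟩ := horb w hw
  refine ⟨g'⁻¹ * g, W.mul_mem (W.inv_mem hg'W) hgW, ?_⟩
  have h1 : ((g'⁻¹ * g : V ≃ₗ[ℝ] V)) v = g'⁻¹ (g v) := rfl
  rw [h1, hgv, ← hg'w]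
  have h2 : ((g'⁻¹ * g' : V ≃ₗ[ℝ] V)) w = g'⁻¹ (g' w) := rfl
  rw [← h2, inv_mul_cancel]
  rfl
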